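/- For every z > 0, 2·∫₀^∞ sinh²(z·x)/sinh²((z+1)·x) dx = (1/(z+1))·(1 − π·z·cot(πz/(z+1))/(z+1)). -/

import Mathlib

/-!
Expanding `1 / sinh² y = 4 ∑_{n ≥ 1} n e^{-2ny}` turns the integrand into a series of
exponential integrals, which can be integrated term by term since every term is nonnegative.
With `t = z / (z + 1)` the resulting series is `∑_{n ≥ 1} 1 / (n² - t²)`, which the
Mittag-Leffler expansion of `π cot (π t)` sums in closed form.
-/

open MeasureTheory Real Set

lemma hasSum_one_div_nat_add_one_sq_sub_sq {t : ℝ} (ht : ∀ n : ℤ, (n : ℝ) ≠ t) :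
    HasSum (fun n : ℕ => 1 / (((n : ℝ) + 1) ^ 2 - t ^ 2))
      ((1 - π * t * cot (π * t)) / (2 * t ^ 2)) := by
  have hx : (t : ℂ) ∈ Complex.integerComplement :=
    fun ⟨n, hn⟩ => ht n (by exact_mod_cast hn)
  have ht0 : t ≠ 0 := by simpa using (ht 0).symm
  have hcot : HasSum (fun n : ℕ => 1 / (t - (n + 1)) + 1 / (t + (n + 1)))
      (π * cot (π * t) - 1 / t) := by
    refine Complex.hasSum_ofReal.1 ?_
    push_cast
    rw [cot_series_rep' hx]
    exact (summable_cotTerm hx).hasSum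
  have hval : (1 - π * t * cot (π * t)) / (2 * t ^ 2) =
      -1 / (2 * t) * (π * cot (π * t) - 1 / t) := by
    field_simp
    ring
  rw [hval]
  refine (hcot.mul_left _).congr_fun fun n => ?_
  have h1 : t - (n + 1) ≠ 0 := by
    intro h; exact ht (n + 1) (by push_cast; linarith)
  have h2 : t + (n + 1) ≠ 0 := by
    intro h; exact ht (-(n + 1)) (by push_cast; linarith)
  have h3 : ((n : ℝ) + 1) ^ 2 - t ^ 2 ≠ 0 := by
    rw [show ((n : ℝ) + 1) ^ 2 - t ^ 2 = -((t - (n + 1)) * (t + (n + 1))) by ring]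
    exact neg_ne_zero.2 (mul_ne_zero h1 h2)
  field_simp
  ring

lemma sinh_sq_mul_exp_neg_mul (a b x : ℝ) :
    sinh (a * x) ^ 2 * exp (-b * x) =
      (exp ((2 * a - b) * x) - 2 * exp (-b * x) + exp ((-2 * a - b) * x)) / 4 := by
  rw [sinh_eq]
  have e1 : exp (a * x) ^ 2 * exp (-b * x) = exp ((2 * a - b) * x) := by
    rw [← exp_nat_mul, ← exp_add]; ring_nf
  have e2 : exp (-(a * x)) ^ 2 * exp (-b * x) = exp ((-2 * a - b) * x) := by
    rw [← exp_nat_mul, ← exp_add]; ring_nf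
  have e3 : exp (a * x) * exp (-(a * x)) = 1 := by rw [← exp_add, add_neg_cancel, exp_zero]
  linear_combination (e1 + e2 - 2 * exp (-b * x) * e3) / 4

lemma integrableOn_sinh_sq_mul_exp_neg {a b : ℝ} (hab : 2 * |a| < b) :
    IntegrableOn (fun x => sinh (a * x) ^ 2 * exp (-b * x)) (Ioi 0) := by
  have h1 : 2 * a - b < 0 := by linarith [le_abs_self a]
  have h2 : -b < 0 := by linarith [abs_nonneg a]
  have h3 : -2 * a - b < 0 := by linarith [neg_abs_le a]
  simp_rw [sinh_sq_mul_exp_neg_mul]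
  exact ((((integrableOn_exp_mul_Ioi h1 0).sub ((integrableOn_exp_mul_Ioi h2 0).const_mul 2)).add
    (integrableOn_exp_mul_Ioi h3 0)).div_const 4)

lemma integral_sinh_sq_mul_exp_neg {a b : ℝ} (hab : 2 * |a| < b) :
    ∫ x in Ioi 0, sinh (a * x) ^ 2 * exp (-b * x) = 2 * a ^ 2 / (b * (b ^ 2 - 4 * a ^ 2)) := by
  have h1 : 2 * a - b < 0 := by linarith [le_abs_self a]
  have h2 : -b < 0 := by linarith [abs_nonneg a]
  have h3 : -2 * a - b < 0 := by linarith [neg_abs_le a]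
  have i1 := integrableOn_exp_mul_Ioi h1 0
  have i2 := (integrableOn_exp_mul_Ioi h2 0).const_mul 2
  have i3 := integrableOn_exp_mul_Ioi h3 0
  simp_rw [sinh_sq_mul_exp_neg_mul]
  have i12 : IntegrableOn (fun x => exp ((2 * a - b) * x) - 2 * exp (-b * x)) (Ioi 0) := i1.sub i2
  rw [integral_div, integral_add i12 i3, integral_sub i1 i2, integral_const_mul,
    integral_exp_mul_Ioi h1, integral_exp_mul_Ioi h2, integral_exp_mul_Ioi h3,
    show b ^ 2 - 4 * a ^ 2 = (b - 2 * a) * (b + 2 * a) by ring,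
    show -2 * a - b = -(b + 2 * a) by ring, show 2 * a - b = -(b - 2 * a) by ring]
  simp only [mul_zero, exp_zero]
  have : b - 2 * a ≠ 0 := by linarith
  have : b + 2 * a ≠ 0 := by linarith
  have : b ≠ 0 := by linarith
  field_simp
  ring

lemma hasSum_inv_sinh_sq {y : ℝ} (hy : 0 < y) :
    HasSum (fun n : ℕ => 4 * (n + 1) * exp (-(2 * (n + 1)) * y)) (sinh y ^ 2)⁻¹ := by
  set q := exp (-y) ^ 2 with hq_def
  have hq : ‖q‖ < 1 := by
    rw [norm_of_nonneg (by positivity), sq_lt_one_iff₀ (exp_pos _).le, Real.exp_lt_one_iff]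
    linarith
  have hgeom : HasSum (fun n : ℕ => ((n + 1 : ℕ) : ℝ) * q ^ (n + 1)) (q / (1 - q) ^ 2) := by
    have := (hasSum_nat_add_iff' (f := fun n : ℕ => (n : ℝ) * q ^ n) 1).2
      (hasSum_coe_mul_geometric_of_norm_lt_one hq)
    rwa [Finset.sum_range_one, Nat.cast_zero, zero_mul, sub_zero] at this
  have hsinh : 4 * q * sinh y ^ 2 = (1 - q) ^ 2 := by
    have h : exp y * exp (-y) = 1 := by rw [← exp_add, add_neg_cancel, exp_zero]
    rw [sinh_eq, hq_def]
    linear_combination (exp y * exp (-y) + 1 - 2 * exp (-y) ^ 2) * h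
  have hsinh0 : sinh y ≠ 0 := (sinh_pos_iff.2 hy).ne'
  have hval : 4 * (q / (1 - q) ^ 2) = (sinh y ^ 2)⁻¹ := by
    rw [← hsinh]
    have : q ≠ 0 := by positivity
    field_simp
  rw [← hval]
  refine (hgeom.mul_left 4).congr_fun fun n => ?_
  rw [hq_def, ← pow_mul, ← exp_nat_mul]
  push_cast
  ring_nf

theorem hasSum_integral_of_nonneg {α ι : Type*} [Countable ι] [MeasurableSpace α]
    {μ : Measure α} {F : ι → α → ℝ} {f : α → ℝ} (hF_int : ∀ i, Integrable (F i) μ)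
    (hF_nonneg : ∀ i, 0 ≤ᵐ[μ] F i) (hF_sum : Summable fun i => ∫ a, F i a ∂μ)
    (hf : ∀ᵐ a ∂μ, HasSum (F · a) (f a)) :
    HasSum (fun i => ∫ a, F i a ∂μ) (∫ a, f a ∂μ) := by
  have hnorm : ∀ i, ∫ a, ‖F i a‖ ∂μ = ∫ a, F i a ∂μ := fun i =>
    integral_congr_ae <| (hF_nonneg i).mono fun a ha => norm_of_nonneg ha
  rw [integral_congr_ae <| hf.mono fun a ha => ha.tsum_eq.symm]
  exact hasSum_integral_of_summable_integral_norm hF_int (hF_sum.congr fun i => (hnorm i).symm)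

lemma intCast_ne_of_ne_zero_of_abs_lt_one {t : ℝ} (ht0 : t ≠ 0) (ht1 : |t| < 1) (n : ℤ) :
    (n : ℝ) ≠ t := by
  rintro rfl
  exact ht0 (by exact_mod_cast Int.abs_lt_one_iff.1 (by exact_mod_cast ht1))

theorem integral_sinh_sq_div_sinh_sq {a c : ℝ} (ha : a ≠ 0) (hac : |a| < c) :
    ∫ x in Ioi 0, sinh (a * x) ^ 2 / sinh (c * x) ^ 2 =
      (1 - π * (a / c) * cot (π * (a / c))) / (2 * c) := by
  have hc : 0 < c := (abs_nonneg a).trans_lt hac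
  set F : ℕ → ℝ → ℝ := fun n x =>
    4 * (n + 1) * (sinh (a * x) ^ 2 * exp (-(2 * (n + 1) * c) * x))
  have hb (n : ℕ) : 2 * |a| < 2 * (n + 1) * c := by
    nlinarith [(n.cast_nonneg : (0 : ℝ) ≤ n)]
  have hF_integral (n : ℕ) : ∫ x in Ioi 0, F n x =
      a ^ 2 / c ^ 3 * (1 / ((n + 1) ^ 2 - (a / c) ^ 2)) := by
    rw [integral_const_mul, integral_sinh_sq_mul_exp_neg (hb n)]
    have hac2 : a ^ 2 < c ^ 2 := by nlinarith [sq_abs a, abs_nonneg a]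
    have : c ^ 2 ≤ ((n : ℝ) + 1) ^ 2 * c ^ 2 :=
      le_mul_of_one_le_left (sq_nonneg c) (one_le_pow₀ (by simp))
    have : 0 < ((n : ℝ) + 1) ^ 2 * c ^ 2 - a ^ 2 := by linarith
    rw [show ((n : ℝ) + 1) ^ 2 - (a / c) ^ 2 = ((n + 1) ^ 2 * c ^ 2 - a ^ 2) / c ^ 2 by
      field_simp, show (2 * ((n : ℝ) + 1) * c) ^ 2 - 4 * a ^ 2 =
      4 * ((n + 1) ^ 2 * c ^ 2 - a ^ 2) by ring]
    field_simp
  have ht : |a / c| < 1 := by rwa [abs_div, abs_of_pos hc, div_lt_one hc]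
  have hsum := ((hasSum_one_div_nat_add_one_sq_sub_sq
    (intCast_ne_of_ne_zero_of_abs_lt_one (div_ne_zero ha hc.ne') ht)).mul_left
      (a ^ 2 / c ^ 3)).congr_fun hF_integral
  have hF_sum : ∀ x ∈ Ioi (0 : ℝ), HasSum (F · x) (sinh (a * x) ^ 2 / sinh (c * x) ^ 2) := by
    intro x hx
    rw [div_eq_mul_inv]
    refine ((hasSum_inv_sinh_sq (mul_pos hc hx)).mul_left _).congr_fun fun n => ?_
    simp only [F]
    rw [show -(2 * ((n : ℝ) + 1) * c) * x = -(2 * (n + 1)) * (c * x) by ring]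
    ring
  have hint := hasSum_integral_of_nonneg
    (fun n => (integrableOn_sinh_sq_mul_exp_neg (hb n)).const_mul _)
    (fun n => Filter.Eventually.of_forall fun x => by positivity)
    hsum.summable (ae_restrict_of_forall_mem measurableSet_Ioi hF_sum)
  rw [hint.unique hsum]
  field_simp

/-- For every `z > 0`,
`2 ∫₀^∞ sinh² (z x) / sinh² ((z+1) x) dx = (1/(z+1)) (1 - π z cot (π z/(z+1)) / (z+1))`. -/
theorem sinh_squared_integral (z : ℝ) (hz : 0 < z) :
    2 * ∫ x in Set.Ioi (0:ℝ), Real.sinh (z * x) ^ 2 / Real.sinh ((z + 1) * x) ^ 2 =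
      1 / (z + 1) * (1 - π * z * Real.cot (π * z / (z + 1)) / (z + 1)) := by
  rw [integral_sinh_sq_div_sinh_sq hz.ne' (by rw [abs_of_pos hz]; linarith), mul_div_assoc]
  field_simp
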